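/- The optical metric of the cosmological C-metric with cosmological constant Λ is projectively equivalent to that with Λ = 0: writing F_Λ(y) = F₀(y) − Λ/(3A²), the Christoffel symbols of h_Λ = F_Λ⁻²dy² + (GF_Λ)⁻¹dx² + (G/F_Λ)dφ² satisfy Γⁱⱼₖ(h_Λ) = Γⁱⱼₖ(h₀) + δⁱⱼωₖ + δⁱₖωⱼ where ω = ½ d(ln F₀ − ln F_Λ). -/

import Mathlib

/-- Partial derivative of a function on `ℝⁿ` in the `i`-th coordinate direction. -/
noncomputable def pderiv {n : ℕ} (f : (Fin n → ℝ) → ℝ) (i : Fin n)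
    (x : Fin n → ℝ) : ℝ :=
  deriv (fun s => f (Function.update x i s)) (x i)

/-- Christoffel symbols `Γⁱⱼₖ = ½ gⁱˡ(∂ⱼ g_{lk} + ∂ₖ g_{lj} − ∂_l g_{jk})`. -/
noncomputable def christoffel {n : ℕ}
    (g : (Fin n → ℝ) → Matrix (Fin n) (Fin n) ℝ) (x : Fin n → ℝ)
    (i j k : Fin n) : ℝ :=
  (1 / 2) * ∑ l, (g x)⁻¹ i l *
    (pderiv (fun y => g y l k) j x + pderiv (fun y => g y l j) k x
      - pderiv (fun y => g y j k) l x)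

/-- The optical metric `h = F⁻²dy² + (GF)⁻¹dx² + (G/F)dφ²` of the C-metric in
coordinates `(y, x, φ)`. -/
noncomputable def copt (F G : ℝ → ℝ) (p : Fin 3 → ℝ) :
    Matrix (Fin 3) (Fin 3) ℝ :=
  Matrix.diagonal ![((F (p 0)) ^ 2)⁻¹, (G (p 1) * F (p 0))⁻¹, G (p 1) / F (p 0)]

/-! The optical metric is diagonal with monomial entries, `h_F = diag(F⁻², F⁻¹G⁻¹, F⁻¹G)`.
For a diagonal metric `Γⁱⱼₖ = ½ dᵢ⁻¹ (δᵢₖ ∂ⱼdᵢ + δᵢⱼ ∂ₖdᵢ − δⱼₖ ∂ᵢdⱼ)`, and for monomial entries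
each `∂ⱼdᵢ / dᵢ` is a logarithmic derivative `aᵢ F'/F` or `bᵢ G'/G`. Hence `F` enters the
Christoffel symbols of `h_F` only through `F'` and through the term `−(F'/2F)(δⁱⱼδₖʸ + δⁱₖδⱼʸ)`.
Since `F_Λ' = F₀'`, the difference of the two connections is the projective term. -/

open Matrix

theorem christoffel_diagonal {n : ℕ} (d : (Fin n → ℝ) → Fin n → ℝ) (x : Fin n → ℝ)
    (hd : ∀ i, d x i ≠ 0) (i j k : Fin n) :
    christoffel (fun y => diagonal (d y)) x i j k =
      (d x i)⁻¹ / 2 * ((if i = k then pderiv (fun y => d y i) j x else 0)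
        + (if i = j then pderiv (fun y => d y i) k x else 0)
        - (if j = k then pderiv (fun y => d y j) i x else 0)) := by
  have hinv : (diagonal (d x))⁻¹ = diagonal (d x)⁻¹ := by
    refine inv_eq_right_inv ?_
    rw [diagonal_mul_diagonal, ← diagonal_one]
    exact congrArg diagonal (funext fun l => mul_inv_cancel₀ (hd l))
  have hpderiv : ∀ l m r, pderiv (fun y => diagonal (d y) l m) r x =
      if l = m then pderiv (fun y => d y l) r x else 0 := by
    intro l m r
    by_cases hlm : l = m
    · subst hlm; simp
    · simp [hlm, pderiv]
  simp only [christoffel, hpderiv]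
  simp only [hinv, diagonal_apply, ite_mul, zero_mul, Finset.sum_ite_eq, Finset.mem_univ,
    if_true, Pi.inv_apply]
  ring

theorem pderiv_zpow_mul_zpow {n : ℕ} {i₀ i₁ : Fin n} (hi : i₀ ≠ i₁) {F G : ℝ → ℝ}
    {x : Fin n → ℝ} (hF : DifferentiableAt ℝ F (x i₀)) (hG : DifferentiableAt ℝ G (x i₁))
    (hF0 : F (x i₀) ≠ 0) (hG0 : G (x i₁) ≠ 0) (a b : ℤ) (j : Fin n) :
    pderiv (fun y => F (y i₀) ^ a * G (y i₁) ^ b) j x =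
      ((if j = i₀ then a * deriv F (x i₀) / F (x i₀) else 0)
        + (if j = i₁ then b * deriv G (x i₁) / G (x i₁) else 0))
        * (F (x i₀) ^ a * G (x i₁) ^ b) := by
  unfold pderiv
  by_cases h₀ : j = i₀
  · subst h₀
    simp only [Function.update_self, Function.update_of_ne hi.symm, if_true, hi, if_false, add_zero]
    have hderiv : HasDerivAt (fun s => F s ^ a * G (x i₁) ^ b)
        (a * F (x j) ^ (a - 1) * deriv F (x j) * G (x i₁) ^ b) (x j) :=
      ((hasDerivAt_zpow a _ (Or.inl hF0)).comp _ hF.hasDerivAt).mul_const _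
    rw [hderiv.deriv, zpow_sub_one₀ hF0]
    field_simp
  by_cases h₁ : j = i₁
  · subst h₁
    simp only [Function.update_self, Function.update_of_ne hi, if_true, h₀, if_false, zero_add]
    have hderiv : HasDerivAt (fun s => F (x i₀) ^ a * G s ^ b)
        (F (x i₀) ^ a * (b * G (x j) ^ (b - 1) * deriv G (x j))) (x j) :=
      ((hasDerivAt_zpow b _ (Or.inl hG0)).comp _ hG.hasDerivAt).const_mul _
    rw [hderiv.deriv, zpow_sub_one₀ hG0]
    field_simp
  · simp [Function.update_of_ne (Ne.symm h₀), Function.update_of_ne (Ne.symm h₁), h₀, h₁]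

theorem copt_eq_diagonal_zpow (F G : ℝ → ℝ) :
    copt F G = fun q => diagonal fun i =>
      F (q 0) ^ (![-2, -1, -1] : Fin 3 → ℤ) i * G (q 1) ^ (![0, -1, 1] : Fin 3 → ℤ) i := by
  funext q
  rw [copt]
  congr 1
  funext i
  fin_cases i <;> simp [_root_.zpow_neg, div_eq_mul_inv, mul_comm]

theorem christoffel_copt_of_deriv_eq {F₁ F₂ G : ℝ → ℝ} {p : Fin 3 → ℝ}
    (hF₁ : DifferentiableAt ℝ F₁ (p 0)) (hF₂ : DifferentiableAt ℝ F₂ (p 0))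
    (hG : DifferentiableAt ℝ G (p 1))
    (hF₁0 : F₁ (p 0) ≠ 0) (hF₂0 : F₂ (p 0) ≠ 0) (hG0 : G (p 1) ≠ 0)
    (hderiv : deriv F₂ (p 0) = deriv F₁ (p 0)) (i j k : Fin 3) :
    christoffel (copt F₂ G) p i j k = christoffel (copt F₁ G) p i j k
      + (if i = j then (if k = 0 then
          (1 / 2) * (deriv F₁ (p 0) / F₁ (p 0) - deriv F₂ (p 0) / F₂ (p 0)) else 0) else 0)
      + (if i = k then (if j = 0 then
          (1 / 2) * (deriv F₁ (p 0) / F₁ (p 0) - deriv F₂ (p 0) / F₂ (p 0)) else 0) else 0) := by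
  let d (F : ℝ → ℝ) (q : Fin 3 → ℝ) (l : Fin 3) : ℝ :=
    F (q 0) ^ (![-2, -1, -1] : Fin 3 → ℤ) l * G (q 1) ^ (![0, -1, 1] : Fin 3 → ℤ) l
  have hd {F : ℝ → ℝ} (hF : F (p 0) ≠ 0) (l : Fin 3) : d F p l ≠ 0 :=
    mul_ne_zero (zpow_ne_zero _ hF) (zpow_ne_zero _ hG0)
  have h01 : (0 : Fin 3) ≠ 1 := by decide
  rw [copt_eq_diagonal_zpow, copt_eq_diagonal_zpow, christoffel_diagonal (d F₁) p (hd hF₁0),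
    christoffel_diagonal (d F₂) p (hd hF₂0)]
  simp only [d, pderiv_zpow_mul_zpow h01 hF₁ hG hF₁0 hG0, pderiv_zpow_mul_zpow h01 hF₂ hG hF₂0 hG0,
    hderiv]
  fin_cases i <;> fin_cases j <;> fin_cases k <;>
    simp only [Fin.isValue, Fin.reduceFinMk, Fin.reduceEq, ↓reduceIte, cons_val_zero, cons_val_one,
      cons_val, _root_.zpow_neg, zpow_ofNat, Int.cast_neg, Int.cast_ofNat, Int.cast_one, Int.cast_zero] <;>
    field_simp <;> ring

theorem stmt13_general (m e A Λ : ℝ) (p : Fin 3 → ℝ) :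
    let F0 : ℝ → ℝ := fun y => y ^ 2 - 2 * m * A * y ^ 3 + e ^ 2 * A ^ 2 * y ^ 4 - 1
    let FΛ : ℝ → ℝ := fun y => F0 y - Λ / (3 * A ^ 2)
    let G : ℝ → ℝ := fun x => 1 - x ^ 2 - 2 * m * A * x ^ 3 - e ^ 2 * A ^ 2 * x ^ 4
    0 < F0 (p 0) → 0 < FΛ (p 0) → 0 < G (p 1) →
    ∀ i j k : Fin 3,
      let ω : Fin 3 → ℝ := fun l => if l = 0 then
        (1 / 2) * (deriv F0 (p 0) / F0 (p 0) - deriv FΛ (p 0) / FΛ (p 0)) else 0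
      christoffel (copt FΛ G) p i j k = christoffel (copt F0 G) p i j k
        + (if i = j then ω k else 0) + (if i = k then ω j else 0) := by
  intro F0 FΛ G hF0 hFΛ hG i j k ω
  have hF0_diff : DifferentiableAt ℝ F0 (p 0) := by fun_prop
  have hFΛ_diff : DifferentiableAt ℝ FΛ (p 0) := by fun_prop
  have hG_diff : DifferentiableAt ℝ G (p 1) := by fun_prop
  exact christoffel_copt_of_deriv_eq hF0_diff hFΛ_diff hG_diff hF0.ne' hFΛ.ne' hG.ne'
    (deriv_sub_const _) i j k

/-- The optical metric of the cosmological C-metric with cosmological constant `Λ`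
is projectively equivalent to that with `Λ = 0`: with
`F₀(y) = y² − 2mAy³ + e²A²y⁴ − 1`, `F_Λ = F₀ − Λ/(3A²)`,
`G(x) = 1 − x² − 2mAx³ − e²A²x⁴`, the Christoffel symbols satisfy
`Γⁱⱼₖ(h_Λ) = Γⁱⱼₖ(h₀) + δⁱⱼωₖ + δⁱₖωⱼ` where `ω = ½ d(ln F₀ − ln F_Λ)`. -/
theorem stmt13 (m e A Λ : ℝ) (hA : A ≠ 0) (p : Fin 3 → ℝ) :
    let F0 : ℝ → ℝ := fun y => y ^ 2 - 2 * m * A * y ^ 3 + e ^ 2 * A ^ 2 * y ^ 4 - 1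
    let FΛ : ℝ → ℝ := fun y => F0 y - Λ / (3 * A ^ 2)
    let G : ℝ → ℝ := fun x => 1 - x ^ 2 - 2 * m * A * x ^ 3 - e ^ 2 * A ^ 2 * x ^ 4
    0 < F0 (p 0) → 0 < FΛ (p 0) → 0 < G (p 1) →
    ∀ i j k : Fin 3,
      let ω : Fin 3 → ℝ := fun l => if l = 0 then
        (1 / 2) * (deriv F0 (p 0) / F0 (p 0) - deriv FΛ (p 0) / FΛ (p 0)) else 0
      christoffel (copt FΛ G) p i j k = christoffel (copt F0 G) p i j k
        + (if i = j then ω k else 0) + (if i = k then ω j else 0) :=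
  stmt13_general m e A Λ p
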